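/- As r → ∞, the real part of the winding number of the image of the upper semicircle under a complex polynomial p of positive degree about 0 tends to degree(p)/2: Re(winding_number(p ∘ part_circlepath z r 0 π, 0)) → deg(p)/2 as r → ∞. -/

import Mathlib

open Complex Filter Topology Polynomial Set

/-- The winding number of a path `γ : [0,1] → ℂ` about `z`,
`(1/(2πi)) ∮_γ dw/(w - z)`. -/
noncomputable def windingNumber (γ : ℝ → ℂ) (z : ℂ) : ℂ :=
  (1 / (2 * Real.pi * Complex.I)) * ∫ t in (0:ℝ)..1, deriv γ t / (γ t - z)

/-- The straight-line path from `a` to `b`. -/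
noncomputable def linepath (a b : ℂ) : ℝ → ℂ := fun t => (1 - (t : ℂ)) * a + (t : ℂ) * b

/-- The circular-arc path `t ↦ z + r·exp(i·((1-t)·st + t·tt))`. -/
noncomputable def partCirclepath (z : ℂ) (r st tt : ℝ) : ℝ → ℂ :=
  fun t => z + (r : ℂ) * Complex.exp (Complex.I * (((1 - t) * st + t * tt : ℝ) : ℂ))

/-!
On the arc `w = z + r e^{iπt}` we have `dw = iπ (w - z) dt`, so the winding number of `p ∘ γ_r`
is `½ ∫₀¹ g(γ_r t) dt` with `g w = (w - z) p'(w) / p(w)`. Comparing leading coefficients,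
`g w → deg p` as `|w| → ∞`, and `|γ_r t| ≥ r - |z|` uniformly in `t`, so the integrand
converges uniformly to `deg p` and the winding number tends to `deg p / 2`.
-/

open Bornology

namespace Polynomial

variable {𝕜 : Type*} [NormedField 𝕜]

theorem tendsto_eval_div_eval_cobounded_of_degree_eq {P Q : 𝕜[X]} (h : P.degree = Q.degree) :
    Tendsto (fun x => P.eval x / Q.eval x) (cobounded 𝕜)
      (𝓝 (P.leadingCoeff / Q.leadingCoeff)) := by
  have hn : P.natDegree = Q.natDegree := natDegree_eq_natDegree h
  have hequiv := isEquivalent_cobounded_leading_monomial (P := P) |>.div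
    (isEquivalent_cobounded_leading_monomial (P := Q))
  refine hequiv.symm.tendsto_nhds (tendsto_const_nhds.congr' ?_)
  filter_upwards [eventually_ne_cobounded (0 : 𝕜)] with x hx
  rw [hn, Pi.div_apply, mul_div_mul_right _ _ (pow_ne_zero _ hx)]

theorem tendsto_sub_mul_eval_derivative_div_eval_cobounded [CharZero 𝕜] (z : 𝕜) {p : 𝕜[X]}
    (hp : 0 < p.natDegree) :
    Tendsto (fun w => (w - z) * (derivative p).eval w / p.eval w) (cobounded 𝕜)
      (𝓝 (p.natDegree : 𝕜)) := by
  have hp0 : p ≠ 0 := ne_zero_of_natDegree_gt hp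
  have hdeg : ((X - C z) * derivative p).degree = p.degree := by
    rw [degree_mul, degree_X_sub_C, degree_eq_natDegree hp0,
      degree_eq_natDegree (derivative_ne_zero.mpr hp.ne'), natDegree_derivative]
    norm_cast; omega
  have hlc : ((X - C z) * derivative p).leadingCoeff / p.leadingCoeff = p.natDegree := by
    rw [leadingCoeff_mul, leadingCoeff_X_sub_C, leadingCoeff_derivative, one_mul,
      mul_div_cancel_left₀ _ (leadingCoeff_ne_zero.mpr hp0)]
  simpa only [hlc, eval_mul, eval_sub, eval_X, eval_C] using
    tendsto_eval_div_eval_cobounded_of_degree_eq hdeg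

end Polynomial

theorem tendsto_intervalIntegral_comp_of_tendsto {ι α E : Type*} [TopologicalSpace α]
    [NormedAddCommGroup E] [NormedSpace ℝ E] [CompleteSpace E]
    {L : Filter α} {g : α → E} {c : E} (hg : Tendsto g L (𝓝 c)) (hgc : ∀ᶠ w in L, ContinuousAt g w)
    {l : Filter ι} [l.IsCountablyGenerated] {γ : ι → ℝ → α} (hγ : ∀ i, Continuous (γ i))
    (hγL : Tendsto (fun q : ι × ℝ => γ q.1 q.2) (l ×ˢ ⊤) L) (a b : ℝ) :
    Tendsto (fun i => ∫ t in a..b, g (γ i t)) l (𝓝 ((b - a) • c)) := by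
  have hunif : TendstoUniformly (fun i t => g (γ i t)) (fun _ => c) l := by
    rw [tendstoUniformly_iff_tendsto]
    exact (tendsto_const_nhds.prodMk_nhds (hg.comp hγL)).mono_right (nhds_le_uniformity c)
  have hcont : ∀ᶠ i in l, Continuous fun t => g (γ i t) := by
    have := hγL.eventually hgc
    rw [← principal_univ, eventually_prod_principal_iff] at this
    filter_upwards [this] with i hi
    exact continuous_iff_continuousAt.mpr fun t => (hi t trivial).comp (hγ i).continuousAt
  rw [← intervalIntegral.integral_const]
  exact hunif.tendstoUniformlyOn.tendsto_intervalIntegral_of_continuousOn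
    (hcont.mono fun i hi => hi.continuousOn)

section partCirclepath

variable (z : ℂ) (r s e : ℝ)

theorem continuous_partCirclepath : Continuous (partCirclepath z r s e) := by
  unfold partCirclepath; fun_prop

theorem hasDerivAt_partCirclepath (t : ℝ) :
    HasDerivAt (partCirclepath z r s e) (I * (e - s) * (partCirclepath z r s e t - z)) t := by
  have hθ : HasDerivAt (fun t : ℝ => (((1 - t) * s + t * e : ℝ) : ℂ)) (e - s : ℝ) t :=
    ((((hasDerivAt_id t).const_sub 1).mul_const s).add ((hasDerivAt_id t).mul_const e))
      |>.ofReal_comp |>.congr_deriv (by simp; ring)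
  refine (((hθ.const_mul I).cexp.const_mul (r : ℂ)).const_add z).congr_deriv ?_
  simp only [partCirclepath, add_sub_cancel_left]
  push_cast; ring

theorem norm_partCirclepath_sub (t : ℝ) : ‖partCirclepath z r s e t - z‖ = |r| := by
  simp [partCirclepath, Complex.norm_exp]

theorem tendsto_partCirclepath_cobounded :
    Tendsto (fun q : ℝ × ℝ => partCirclepath z q.1 s e q.2) (atTop ×ˢ ⊤) (cobounded ℂ) := by
  rw [← tendsto_norm_atTop_iff_cobounded]
  refine tendsto_atTop_mono (fun q => ?_)
    (tendsto_atTop_add_const_right _ (-‖z‖) (tendsto_fst (g := ⊤)))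
  have := norm_sub_le (partCirclepath z q.1 s e q.2) z
  rw [norm_partCirclepath_sub] at this
  linarith [le_abs_self q.1]

end partCirclepath

theorem windingNumber_eval_partCirclepath (p : ℂ[X]) (z : ℂ) (r s e : ℝ) :
    windingNumber (fun t => p.eval (partCirclepath z r s e t)) 0 =
      ((e - s) / (2 * Real.pi) : ℝ) * ∫ t in (0:ℝ)..1,
        (partCirclepath z r s e t - z) * (derivative p).eval (partCirclepath z r s e t) /
          p.eval (partCirclepath z r s e t) := by
  have hderiv (t : ℝ) : deriv (fun t => p.eval (partCirclepath z r s e t)) t =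
      I * (e - s) * ((partCirclepath z r s e t - z) *
        (derivative p).eval (partCirclepath z r s e t)) := by
    have hcomp : HasDerivAt (fun t => p.eval (partCirclepath z r s e t)) _ t :=
      (p.hasDerivAt _).scomp t (hasDerivAt_partCirclepath z r s e t)
    rw [hcomp.deriv, smul_eq_mul]
    ring
  simp_rw [windingNumber, hderiv, sub_zero, mul_div_assoc, intervalIntegral.integral_const_mul]
  have : (Real.pi : ℂ) ≠ 0 := ofReal_ne_zero.mpr Real.pi_ne_zero
  push_cast
  field_simp

theorem Re_winding_number_poly_part_circlepath (z : ℂ) (p : Polynomial ℂ)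
    (hp : 0 < p.natDegree) :
    Tendsto (fun r : ℝ =>
        (windingNumber (fun t => p.eval (partCirclepath z r 0 Real.pi t)) 0).re)
      atTop (𝓝 ((p.natDegree : ℝ) / 2)) := by
  have hp_ne : ∀ᶠ w in cobounded ℂ, p.eval w ≠ 0 := by
    have := p.tendsto_norm_atTop (natDegree_pos_iff_degree_pos.mp hp) tendsto_norm_cobounded_atTop
    exact (this.eventually_ne_atTop 0).mono fun w hw => norm_ne_zero_iff.mp hw
  have hcont : ∀ᶠ w in cobounded ℂ,
      ContinuousAt (fun w => (w - z) * (derivative p).eval w / p.eval w) w :=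
    hp_ne.mono fun w hw => by fun_prop (disch := exact hw)
  have hint := tendsto_intervalIntegral_comp_of_tendsto
    (tendsto_sub_mul_eval_derivative_div_eval_cobounded z hp) hcont
    (continuous_partCirclepath z · 0 Real.pi) (tendsto_partCirclepath_cobounded z 0 Real.pi) 0 1
  have hwind : Tendsto (fun r : ℝ =>
      windingNumber (fun t => p.eval (partCirclepath z r 0 Real.pi t)) 0) atTop
      (𝓝 ((p.natDegree : ℂ) / 2)) := by
    simp_rw [windingNumber_eval_partCirclepath]
    convert hint.const_mul (((Real.pi - 0) / (2 * Real.pi) : ℝ) : ℂ) using 2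
    rw [sub_zero, sub_zero, one_smul, div_mul_cancel_right₀ Real.pi_ne_zero]
    push_cast; ring
  have hre := (continuous_re.tendsto _).comp hwind
  rwa [div_ofNat_re, natCast_re] at hre
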